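/- Let Q0 be a finite nonempty type and C : Q0 → Q0 → ℤ a symmetric matrix with C i i = 2 for all i and C i j ≤ 0 for i ≠ j, with form (x, y) := Σ_{i,j} x i * C i j * y j. Let δ : Q0 → ℕ satisfy condition (∗) for C and let d : Q0 → ℕ have full support (d i ≥ 1 for every i). Then there exists N ∈ ℕ such that for all n ≥ N, writing τ := d + n·δ: the maximum over all l ≥ 2 and all decompositions τ = d^1 + … + d^l into nonzero dimension vectors of the quantity (τ, τ) − Σ_{k=1}^l (d^k, d^k) equals the maximum over all dimension vectors v with v ≤ τ, v ≠ 0, v ≠ τ of 2·(v, τ − v); moreover this common maximum tends to −∞ as n → ∞. -/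

import Mathlib

/-!
Write `τ = d + nδ`. Since `(e_i, δ) < 0`, every row of the form at `τ` satisfies
`(e_i, τ) ≤ K - n` for a constant `K` depending only on `d`. For `0 < v < τ` put `z = 2v - τ`,
so that `4 (v, τ - v) = (τ, τ) - (z, z)`.

If some coordinate of `v` lies strictly between `0` and `τ_i`, then `|z|` is a point of the box
`[0, τ]` other than `τ`. A minimiser `m` of the form on this punctured box satisfies
`(e_i, m) ≤ 1` for every `i` (compare with `m - e_i`), so `(m, m) - (τ, τ) = -(τ - m, τ + m)`
is at least `n - K - 1`; and `(z, z) ≥ (|z|, |z|)` because the off-diagonal entries are `≤ 0`.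
Otherwise `v` and `τ - v` have complementary supports, and condition (∗) produces an edge
between these supports with an endpoint in `supp δ`; its term alone contributes `≤ -n`.

Hence the maximum `m` of `2 (v, τ - v)` tends to `-∞`. Since
`Σ_k 2 (d^k, τ - d^k) = 2 ((τ, τ) - Σ_k (d^k, d^k))`, a decomposition into `l ≥ 2` parts gives a
value at most `l m / 2 ≤ m` once `m ≤ 0`, and two-part decompositions `(v, τ - v)` attain `m`.
-/

open Finset

/-- The bilinear form associated to an integer matrix `E`:
`⟨x, y⟩ = Σ_{i,j} x i * E i j * y j`. -/
def bform {Q0 : Type*} [Fintype Q0] (E : Q0 → Q0 → ℤ) (x y : Q0 → ℤ) : ℤ :=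
  ∑ i, ∑ j, x i * E i j * y j

/-- A dimension vector `Q0 → ℕ` viewed as an integer vector. -/
def nvec {Q0 : Type*} (v : Q0 → ℕ) : Q0 → ℤ := fun i => (v i : ℤ)

/-- The underlying simple graph of a quiver with matrix `E`: `i` is adjacent to `j`
iff `i ≠ j` and the `(i,j)` entry is negative (for symmetric `E` this is the usual
adjacency `E i j < 0`). -/
def quivGraph {Q0 : Type*} (E : Q0 → Q0 → ℤ) : SimpleGraph Q0 where
  Adj i j := i ≠ j ∧ (E i j < 0 ∨ E j i < 0)
  symm := ⟨fun _ _ h => ⟨h.1.symm, h.2.symm⟩⟩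
  loopless := ⟨fun _ h => h.1 rfl⟩

/-- The subgraph of `quivGraph E` induced on the support of `δ`. -/
def suppGraph {Q0 : Type*} (E : Q0 → Q0 → ℤ) (δ : Q0 → ℕ) :
    SimpleGraph {i : Q0 // δ i ≠ 0} :=
  (quivGraph E).comap Subtype.val

/-- Condition (∗): `⟨e_i, δ⟩ < 0` for every vertex `i`, and any two connected components
of the subgraph induced on `supp δ` are at distance at most one, i.e. either they are
joined by an edge or some vertex is adjacent to both. -/
def condStar {Q0 : Type*} [Fintype Q0] [DecidableEq Q0]
    (E : Q0 → Q0 → ℤ) (δ : Q0 → ℕ) : Prop :=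
  (∀ i : Q0, bform E (Pi.single i 1) (nvec δ) < 0) ∧
    ∀ u v : {i : Q0 // δ i ≠ 0},
      (suppGraph E δ).Reachable u v ∨
        ∃ x y : {i : Q0 // δ i ≠ 0},
          (suppGraph E δ).Reachable u x ∧ (suppGraph E δ).Reachable v y ∧
            ((quivGraph E).Adj x.1 y.1 ∨
              ∃ w : Q0, (quivGraph E).Adj w x.1 ∧ (quivGraph E).Adj w y.1)

/-- Weak condition (∗): as `condStar` but with `⟨e_i, δ⟩ ≤ 0`. -/
def condStarWeak {Q0 : Type*} [Fintype Q0] [DecidableEq Q0]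
    (E : Q0 → Q0 → ℤ) (δ : Q0 → ℕ) : Prop :=
  (∀ i : Q0, bform E (Pi.single i 1) (nvec δ) ≤ 0) ∧
    ∀ u v : {i : Q0 // δ i ≠  0},
      (suppGraph E δ).Reachable u v ∨
        ∃ x y : {i : Q0 // δ i ≠ 0},
          (suppGraph E δ).Reachable u x ∧ (suppGraph E δ).Reachable v y ∧
            ((quivGraph E).Adj x.1 y.1 ∨
              ∃ w : Q0, (quivGraph E).Adj w x.1 ∧ (quivGraph E).Adj w y.1)

/-- The set of values `(τ,τ) - Σ_k (d^k, d^k)` over all decompositions of `τ` into `l ≥ 2`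
nonzero dimension vectors. -/
def decompVals {Q0 : Type*} [Fintype Q0] (C : Q0 → Q0 → ℤ) (τ : Q0 → ℕ) : Set ℤ :=
  {z | ∃ l : ℕ, 2 ≤ l ∧ ∃ ds : Fin l → Q0 → ℕ,
    (∀ k, ds k ≠ 0) ∧ (∀ i, ∑ k, ds k i = τ i) ∧
      z = bform C (nvec τ) (nvec τ) - ∑ k, bform C (nvec (ds k)) (nvec (ds k))}

/-- The set of values `2 (v, τ - v)` over all dimension vectors `0 < v < τ`. -/
def subVals {Q0 : Type*} [Fintype Q0] (C : Q0 → Q0 → ℤ) (τ : Q0 → ℕ) : Set ℤ :=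
  {z | ∃ v : Q0 → ℕ, (∀ i, v i ≤ τ i) ∧ v ≠ 0 ∧ v ≠ τ ∧
    z = 2 * bform C (nvec v) (nvec τ - nvec v)}

open Matrix

section Nvec

variable {Q0 : Type*}

lemma nvec_injective : Function.Injective (nvec : (Q0 → ℕ) → Q0 → ℤ) :=
  fun _ _ h => funext fun i => Nat.cast_injective (congrFun h i)

lemma nvec_zero : nvec (0 : Q0 → ℕ) = 0 := funext fun _ => Nat.cast_zero

lemma nvec_mem_Icc {v τ : Q0 → ℕ} (h : v ≤ τ) : nvec v ∈ Set.Icc 0 (nvec τ) :=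
  ⟨fun _ => Int.natCast_nonneg _, fun i => Int.ofNat_le.2 (h i)⟩

lemma nvec_sub {v τ : Q0 → ℕ} (h : v ≤ τ) : nvec (τ - v) = nvec τ - nvec v :=
  funext fun i => Nat.cast_sub (h i)

lemma nvec_sum {ι : Type*} (s : Finset ι) (v : ι → Q0 → ℕ) :
    nvec (∑ k ∈ s, v k) = ∑ k ∈ s, nvec (v k) :=
  funext fun i => by simp [nvec]

end Nvec

section Form

variable {Q0 : Type*} [Fintype Q0] (C : Q0 → Q0 → ℤ)

lemma bform_eq_dotProduct (x y : Q0 → ℤ) : bform C x y = x ⬝ᵥ (of C *ᵥ y) := by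
  simp only [bform, dotProduct, mulVec, of_apply, mul_sum, mul_assoc]

lemma bform_add_left (x x' y : Q0 → ℤ) : bform C (x + x') y = bform C x y + bform C x' y := by
  simp only [bform_eq_dotProduct, add_dotProduct]

lemma bform_sub_left (x x' y : Q0 → ℤ) : bform C (x - x') y = bform C x y - bform C x' y := by
  simp only [bform_eq_dotProduct, sub_dotProduct]

lemma bform_add_right (x y y' : Q0 → ℤ) : bform C x (y + y') = bform C x y + bform C x y' := by
  simp only [bform_eq_dotProduct, mulVec_add, dotProduct_add]

lemma bform_sub_right (x y y' : Q0 → ℤ) : bform C x (y - y') = bform C x y - bform C x y' := by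
  simp only [bform_eq_dotProduct, mulVec_sub, dotProduct_sub]

lemma bform_sum_left {ι : Type*} (s : Finset ι) (x : ι → Q0 → ℤ) (y : Q0 → ℤ) :
    bform C (∑ k ∈ s, x k) y = ∑ k ∈ s, bform C (x k) y := by
  simp only [bform_eq_dotProduct, sum_dotProduct]

lemma bform_single_left [DecidableEq Q0] (i : Q0) (y : Q0 → ℤ) :
    bform C (Pi.single i 1) y = (of C *ᵥ y) i := by
  rw [bform_eq_dotProduct, single_dotProduct, one_mul]

lemma bform_comm (hsymm : ∀ i j, C i j = C j i) (x y : Q0 → ℤ) :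
    bform C x y = bform C y x := by
  rw [bform, bform, sum_comm]
  simp only [hsymm, mul_comm, mul_left_comm]

lemma bform_sub_single_self [DecidableEq Q0] (hsymm : ∀ i j, C i j = C j i) (x : Q0 → ℤ)
    (i : Q0) :
    bform C (x - Pi.single i 1) (x - Pi.single i 1) = bform C x x - 2 * (of C *ᵥ x) i + C i i := by
  have hii : bform C (Pi.single i 1) (Pi.single i 1) = C i i := by
    simp [bform_single_left, mulVec_single]
  rw [bform_sub_left, bform_sub_right, bform_sub_right, bform_comm C hsymm x (Pi.single i 1),
    bform_single_left, hii]
  ring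

lemma bform_self_sub_bform_self (hsymm : ∀ i j, C i j = C j i) (x y : Q0 → ℤ) :
    bform C x x - bform C y y = bform C (x - y) (x + y) := by
  rw [bform_sub_left, bform_add_right, bform_add_right, bform_comm C hsymm y x]
  ring

lemma two_mul_bform_sub_eq (hsymm : ∀ i j, C i j = C j i) (x y : Q0 → ℤ) :
    2 * bform C y (x - y) = bform C x x - bform C y y - bform C (x - y) (x - y) := by
  simp only [bform_sub_left, bform_sub_right, bform_comm C hsymm x y]
  ring

lemma four_mul_bform_sub_eq (hsymm : ∀ i j, C i j = C j i) (x y : Q0 → ℤ) :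
    4 * bform C y (x - y) = bform C x x - bform C (2 • y - x) (2 • y - x) := by
  simp only [bform_sub_left, bform_sub_right, two_nsmul, bform_add_left, bform_add_right,
    bform_comm C hsymm x y]
  ring

lemma bform_abs_le (hoff : ∀ i j, i ≠ j → C i j ≤ 0) (z : Q0 → ℤ) :
    bform C |z| |z| ≤ bform C z z := by
  refine sum_le_sum fun i _ => sum_le_sum fun j _ => ?_
  simp only [Pi.abs_apply]
  rcases eq_or_ne i j with rfl | hij
  · rw [mul_right_comm, abs_mul_abs_self, mul_right_comm]
  · calc |z i| * C i j * |z j| = C i j * |z i * z j| := by rw [abs_mul]; ring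
      _ ≤ C i j * (z i * z j) := mul_le_mul_of_nonpos_left (le_abs_self _) (hoff i j hij)
      _ = z i * C i j * z j := by ring

lemma le_neg_dotProduct_of_le_neg {u w : Q0 → ℤ} {c : ℤ} (hc : 0 ≤ c) (hu : 0 ≤ u)
    (hu0 : u ≠ 0) (hw : ∀ i, w i ≤ -c) : c ≤ -(u ⬝ᵥ w) := by
  obtain ⟨i, hi⟩ := Function.ne_iff.1 hu0
  have hui : 0 < u i := (hu i).lt_of_ne' hi
  have : u ⬝ᵥ w ≤ u i * -c := calc
    u ⬝ᵥ w ≤ u ⬝ᵥ fun _ => -c := dotProduct_le_dotProduct_of_nonneg_left hw hu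
    _ = (∑ j, u j) * -c := by rw [dotProduct, sum_mul]
    _ ≤ u i * -c :=
      mul_le_mul_of_nonpos_right (single_le_sum (fun j _ => hu j) (mem_univ i)) (by linarith)
  nlinarith

end Form

section Box

variable {Q0 : Type*} [Fintype Q0] [DecidableEq Q0] (C : Q0 → Q0 → ℤ)

lemma mulVec_apply_le_one_of_isMinOn (hsymm : ∀ i j, C i j = C j i) (hdiag : ∀ i, C i i = 2)
    (hoff : ∀ i j, i ≠ j → C i j ≤ 0) {τ m : Q0 → ℤ} (hm : m ∈ Set.Icc 0 τ)
    (hmin : IsMinOn (fun y => bform C y y) (Set.Icc 0 τ \ {τ}) m) (i : Q0) :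
    (of C *ᵥ m) i ≤ 1 := by
  have hm0 : ∀ j, (0 : ℤ) ≤ m j := hm.1
  rcases (hm0 i).eq_or_lt with hmi | hmi
  · have : (of C *ᵥ m) i ≤ 0 := by
      refine sum_nonpos fun j _ => ?_
      rcases eq_or_ne i j with rfl | hij
      · simp [← hmi]
      · exact mul_nonpos_of_nonpos_of_nonneg (hoff i j hij) (hm0 j)
    linarith
  · have hmem : m - Pi.single i 1 ∈ Set.Icc 0 τ \ {τ} := by
      refine ⟨⟨fun j => ?_, (sub_le_self _ (Pi.single_nonneg.2 zero_le_one)).trans hm.2⟩,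
        fun h => ?_⟩
      · rcases eq_or_ne j i with rfl | hji
        · simp only [Pi.zero_apply, Pi.sub_apply, Pi.single_eq_same, sub_nonneg]
          omega
        · simpa [hji] using hm0 j
      · have := congrFun h i
        simp only [Pi.sub_apply, Pi.single_eq_same] at this
        linarith [hm.2 i]
    have : bform C m m ≤ bform C _ _ := hmin hmem
    rw [bform_sub_single_self C hsymm, hdiag] at this
    linarith

theorem bform_self_add_le_of_mem_Icc_diff (hsymm : ∀ i j, C i j = C j i)
    (hdiag : ∀ i, C i i = 2) (hoff : ∀ i j, i ≠ j → C i j ≤ 0) {τ : Q0 → ℤ} {c : ℤ} (hc : 0 ≤ c)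
    (hrow : ∀ i, (of C *ᵥ τ) i ≤ -c - 1) {y : Q0 → ℤ} (hy : y ∈ Set.Icc 0 τ \ {τ}) :
    bform C τ τ + c ≤ bform C y y := by
  obtain ⟨m, hm, hmin⟩ := Set.exists_min_image (Set.Icc 0 τ \ {τ}) (fun y => bform C y y)
    (Set.finite_Icc 0 τ).sdiff ⟨y, hy⟩
  have hkkt := mulVec_apply_le_one_of_isMinOn C hsymm hdiag hoff hm.1 hmin
  have hgap : c ≤ -((τ - m) ⬝ᵥ (of C *ᵥ (τ + m))) :=
    le_neg_dotProduct_of_le_neg hc (sub_nonneg.2 hm.1.2) (sub_ne_zero.2 (Ne.symm hm.2))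
      fun i => by rw [mulVec_add, Pi.add_apply]; linarith [hrow i, hkkt i]
  have hdiff := bform_self_sub_bform_self C hsymm τ m
  rw [bform_eq_dotProduct C (τ - m)] at hdiff
  calc bform C τ τ + c ≤ bform C m m := by linarith
    _ ≤ bform C y y := hmin y hy

end Box

theorem SimpleGraph.Preconnected.exists_adj_mem_notMem {V : Type*} {G : SimpleGraph V}
    (hG : G.Preconnected) {S : Set V} {a b : V} (ha : a ∈ S) (hb : b ∉ S) :
    ∃ x y, G.Adj x y ∧ x ∈ S ∧ y ∉ S := by
  obtain ⟨p⟩ := hG a b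
  obtain ⟨d, -, hd⟩ := p.exists_boundary_dart S ha hb
  exact ⟨_, _, d.adj, hd⟩

theorem Fintype.sum_le_apply_of_nonpos {ι M : Type*} [Fintype ι] [AddCommMonoid M] [Preorder M]
    [AddLeftMono M] {f : ι → M} (hf : ∀ i, f i ≤ 0) (a : ι) : ∑ i, f i ≤ f a := by
  simpa using sum_anti_set_of_nonpos' hf (subset_univ {a})

section CondStar

variable {Q0 : Type*} [Fintype Q0] [DecidableEq Q0] {C : Q0 → Q0 → ℤ} {δ : Q0 → ℕ}

def suppNbhdGraph (C : Q0 → Q0 → ℤ) (δ : Q0 → ℕ) : SimpleGraph Q0 where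
  Adj a b := (quivGraph C).Adj a b ∧ (δ a ≠ 0 ∨ δ b ≠ 0)
  symm := ⟨fun _ _ h => ⟨h.1.symm, h.2.symm⟩⟩
  loopless := ⟨fun _ h => h.1.ne rfl⟩

lemma condStar.exists_neg_entry (hδ : condStar C δ) (i : Q0) : ∃ j, C i j < 0 ∧ δ j ≠ 0 := by
  have hrow := hδ.1 i
  rw [bform_single_left] at hrow
  by_contra! h
  refine hrow.not_ge (sum_nonneg fun j _ => ?_)
  rcases lt_or_ge (C i j) 0 with hC | hC
  · simp [nvec, h j hC]
  · exact mul_nonneg hC (Int.natCast_nonneg _)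

lemma condStar.preconnected_suppNbhdGraph (hδ : condStar C δ) :
    (suppNbhdGraph C δ).Preconnected := by
  set G := suppNbhdGraph C δ
  let ι : suppGraph C δ →g G := ⟨Subtype.val, fun {x _} h => ⟨h, Or.inl x.2⟩⟩
  have hedge : ∀ {a b}, (quivGraph C).Adj a b → δ a ≠ 0 ∨ δ b ≠ 0 → G.Reachable a b :=
    fun h h' => SimpleGraph.Adj.reachable (G := G) ⟨h, h'⟩
  have hsupp : ∀ x y : {i // δ i ≠ 0}, G.Reachable x y := by
    intro x y
    rcases hδ.2 x y with hxy | ⟨x', y', hx, hy, hadj | ⟨w, hwx, hwy⟩⟩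
    · exact hxy.map ι
    · exact (hx.map ι).trans ((hedge hadj (Or.inl x'.2)).trans (hy.map ι).symm)
    · exact (hx.map ι).trans ((hedge hwx (Or.inr x'.2)).symm.trans
        ((hedge hwy (Or.inr y'.2)).trans (hy.map ι).symm))
  have hnear : ∀ i, ∃ x : {i // δ i ≠ 0}, G.Reachable i x := by
    intro i
    by_cases hi : δ i = 0
    · obtain ⟨j, hCj, hj⟩ := hδ.exists_neg_entry i
      exact ⟨⟨j, hj⟩, hedge ⟨by rintro rfl; exact hj hi, Or.inl hCj⟩ (Or.inr hj)⟩
    · exact ⟨⟨i, hi⟩, .rfl⟩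
  intro a b
  obtain ⟨x, hx⟩ := hnear a
  obtain ⟨y, hy⟩ := hnear b
  exact hx.trans ((hsupp x y).trans hy.symm)

lemma condStar.mulVec_add_mul_le (hδ : condStar C δ) (d : Q0 → ℕ) (n : ℕ) (i : Q0) :
    (of C *ᵥ nvec fun i => d i + n * δ i) i ≤ (of C *ᵥ nvec d) i - n := by
  have hδi := hδ.1 i
  rw [bform_single_left] at hδi
  have hsplit : nvec (fun i => d i + n * δ i) = nvec d + (n : ℤ) • nvec δ :=
    funext fun i => by simp [nvec]
  rw [hsplit, mulVec_add, mulVec_smul, Pi.add_apply, Pi.smul_apply, smul_eq_mul]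
  nlinarith

end CondStar

section SubvectorBound

variable {Q0 : Type*} [Fintype Q0] [DecidableEq Q0] (C : Q0 → Q0 → ℤ) {δ : Q0 → ℕ}

theorem bform_sub_le_of_forall_eq_zero_or_eq (hsymm : ∀ i j, C i j = C j i)
    (hoff : ∀ i j, i ≠ j → C i j ≤ 0) (hδ : condStar C δ) {τ v : Q0 → ℤ} {n : ℤ}
    (hτ : ∀ i, 1 ≤ τ i) (hτδ : ∀ i, δ i ≠ 0 → n ≤ τ i) (hv : ∀ i, v i = 0 ∨ v i = τ i)
    (hv0 : v ≠ 0) (hvτ : v ≠ τ) : bform C v (τ - v) ≤ -n := by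
  obtain ⟨a, ha⟩ := Function.ne_iff.1 hv0
  obtain ⟨b, hb⟩ := Function.ne_iff.1 hvτ
  obtain ⟨x, y, ⟨hxy, hδxy⟩, hx, hy⟩ :=
    hδ.preconnected_suppNbhdGraph.exists_adj_mem_notMem (S := {i | v i ≠ 0}) ha
      (by simpa using (hv b).resolve_right hb)
  have hvx : v x = τ x := (hv x).resolve_left hx
  have hvy : v y = 0 := not_not.1 hy
  have hCxy : C x y < 0 := hxy.2.elim id fun h => (hsymm x y).trans_lt h
  have hbox : ∀ j, 0 ≤ v j ∧ v j ≤ τ j := fun j => by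
    have := hτ j
    rcases hv j with h | h <;> omega
  have hterm : ∀ i j, v i * C i j * (τ - v) j ≤ 0 := by
    intro i j
    rcases hv i with hi | hi
    · simp [hi]
    rcases eq_or_ne i j with rfl | hij
    · simp [hi]
    · exact mul_nonpos_of_nonpos_of_nonneg
        (mul_nonpos_of_nonneg_of_nonpos (hbox i).1 (hoff i j hij)) (sub_nonneg.2 (hbox j).2)
  have hx1 := hτ x
  have hy1 := hτ y
  have hn : n ≤ τ x * τ y := by
    rcases hδxy with h | h
    · nlinarith [hτδ x h]
    · nlinarith [hτδ y h]
  calc bform C v (τ - v) ≤ ∑ j, v x * C x j * (τ - v) j :=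
        Fintype.sum_le_apply_of_nonpos (fun i => sum_nonpos fun j _ => hterm i j) x
    _ ≤ v x * C x y * (τ - v) y := Fintype.sum_le_apply_of_nonpos (hterm x) y
    _ = τ x * C x y * τ y := by simp [hvx, hvy]
    _ ≤ -n := by nlinarith [mul_pos (by omega : 0 < τ x) (by omega : 0 < τ y)]

theorem four_mul_bform_sub_le_of_mem_Ioo (hsymm : ∀ i j, C i j = C j i)
    (hdiag : ∀ i, C i i = 2) (hoff : ∀ i j, i ≠ j → C i j ≤ 0) {τ v : Q0 → ℤ} {c : ℤ}
    (hc : 0 ≤ c) (hrow : ∀ i, (of C *ᵥ τ) i ≤ -c - 1) (hv : v ∈ Set.Icc 0 τ) {i : Q0}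
    (hi : v i ∈ Set.Ioo 0 (τ i)) : 4 * bform C v (τ - v) ≤ -c := by
  set z : Q0 → ℤ := 2 • v - τ
  have hz : ∀ j, z j = 2 * v j - τ j := fun j => by simp [z, two_mul]
  have hv0 : ∀ j, (0 : ℤ) ≤ v j := hv.1
  have hzτ : |z| ∈ Set.Icc 0 τ \ {τ} := by
    refine ⟨⟨abs_nonneg z, fun j => abs_le.2 ?_⟩, fun h => ?_⟩
    · rw [hz]
      constructor <;> linarith [hv0 j, hv.2 j]
    · have : |z i| < τ i := abs_lt.2 (by rw [hz]; constructor <;> linarith [hi.1, hi.2])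
      exact this.ne (congrFun h i)
  have := bform_self_add_le_of_mem_Icc_diff C hsymm hdiag hoff hc hrow hzτ
  have := bform_abs_le C hoff z
  have := four_mul_bform_sub_eq C hsymm τ v
  linarith

theorem four_mul_bform_sub_le (hsymm : ∀ i j, C i j = C j i) (hdiag : ∀ i, C i i = 2)
    (hoff : ∀ i j, i ≠ j → C i j ≤ 0) (hδ : condStar C δ) {τ v : Q0 → ℤ} {n c : ℤ}
    (hc : 0 ≤ c) (hcn : c ≤ 4 * n) (hτ : ∀ i, 1 ≤ τ i) (hτδ : ∀ i, δ i ≠ 0 → n ≤ τ i)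
    (hrow : ∀ i, (of C *ᵥ τ) i ≤ -c - 1) (hv : v ∈ Set.Icc 0 τ) (hv0 : v ≠ 0) (hvτ : v ≠ τ) :
    4 * bform C v (τ - v) ≤ -c := by
  by_cases hext : ∀ i, v i = 0 ∨ v i = τ i
  · have := bform_sub_le_of_forall_eq_zero_or_eq C hsymm hoff hδ hτ hτδ hext hv0 hvτ
    linarith
  · push Not at hext
    obtain ⟨i, hi0, hiτ⟩ := hext
    exact four_mul_bform_sub_le_of_mem_Ioo C hsymm hdiag hoff hc hrow hv
      ⟨(hv.1 i).lt_of_ne' hi0, (hv.2 i).lt_of_ne hiτ⟩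

end SubvectorBound

section Values

variable {Q0 : Type*} [Fintype Q0] (C : Q0 → Q0 → ℤ)

lemma subVals_finite [DecidableEq Q0] (τ : Q0 → ℕ) : (subVals C τ).Finite :=
  ((Set.finite_Iic τ).image fun v => 2 * bform C (nvec v) (nvec τ - nvec v)).subset
    fun _ ⟨v, hv, _, _, hz⟩ => ⟨v, hv, hz.symm⟩

lemma subVals_subset_decompVals (hsymm : ∀ i j, C i j = C j i) (τ : Q0 → ℕ) :
    subVals C τ ⊆ decompVals C τ := by
  rintro _ ⟨v, hvτ, hv0, hne, rfl⟩
  refine ⟨2, le_rfl, ![v, τ - v], fun k => ?_, fun i => ?_, ?_⟩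
  · fin_cases k
    · exact hv0
    · exact fun h => hne (le_antisymm hvτ (tsub_eq_zero_iff_le.1 h))
  · simp [Fin.sum_univ_two, Nat.add_sub_cancel' (hvτ i)]
  · rw [Fin.sum_univ_two]
    simp only [cons_val_zero, cons_val_one, cons_val_fin_one, nvec_sub hvτ]
    linarith [two_mul_bform_sub_eq C hsymm (nvec τ) (nvec v)]

lemma mem_subVals_of_sum_eq {τ : Q0 → ℕ} {l : ℕ} (hl : 2 ≤ l) {ds : Fin l → Q0 → ℕ}
    (hds : ∀ k, ds k ≠ 0) (hsum : ∑ k, ds k = τ) (k : Fin l) :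
    2 * bform C (nvec (ds k)) (nvec τ - nvec (ds k)) ∈ subVals C τ := by
  have hle : ds k ≤ τ := hsum ▸ single_le_sum (f := ds) (fun _ _ => zero_le) (mem_univ k)
  refine ⟨ds k, hle, hds k, fun h => ?_, rfl⟩
  obtain ⟨k', hk'⟩ := Fintype.exists_ne_of_one_lt_card (by rwa [Fintype.card_fin]) k
  have := add_le_sum (f := ds) (fun _ _ => zero_le) (mem_univ k) (mem_univ k') hk'.symm
  rw [hsum, ← h] at this
  exact hds k' (funext fun i => by simpa using this i)

lemma mem_upperBounds_decompVals {τ : Q0 → ℕ} {m : ℤ} (hm : m ≤ 0)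
    (hub : m ∈ upperBounds (subVals C τ)) : m ∈ upperBounds (decompVals C τ) := by
  rintro _ ⟨l, hl, ds, hds, hsum, rfl⟩
  have hτ : ∑ k, ds k = τ := funext fun i => by simpa using hsum i
  have hid : ∑ k, 2 * bform C (nvec (ds k)) (nvec τ - nvec (ds k)) =
      2 * (bform C (nvec τ) (nvec τ) - ∑ k, bform C (nvec (ds k)) (nvec (ds k))) := by
    simp only [bform_sub_right, ← mul_sum, sum_sub_distrib, ← bform_sum_left, ← nvec_sum, hτ]
  have hle : ∑ k : Fin l, 2 * bform C (nvec (ds k)) (nvec τ - nvec (ds k)) ≤ l * m := calc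
    _ ≤ ∑ _k : Fin l, m := sum_le_sum fun k _ => hub (mem_subVals_of_sum_eq C hl hds hτ k)
    _ = l * m := by simp
  have : (2 : ℤ) ≤ l := by exact_mod_cast hl
  nlinarith

theorem exists_isGreatest_decompVals_subVals [DecidableEq Q0] (hsymm : ∀ i j, C i j = C j i)
    {τ : Q0 → ℕ} (hne : (subVals C τ).Nonempty) (hnonpos : ∀ z ∈ subVals C τ, z ≤ 0) :
    ∃ m, IsGreatest (decompVals C τ) m ∧ IsGreatest (subVals C τ) m := by
  obtain ⟨m, hm, hmax⟩ := Set.exists_max_image _ id (subVals_finite C τ) hne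
  exact ⟨m, ⟨subVals_subset_decompVals C hsymm τ hm,
    mem_upperBounds_decompVals C (hnonpos m hm) hmax⟩, hm, hmax⟩

theorem exists_isGreatest_decompVals_subVals_of_mulVec_le [DecidableEq Q0] [Nonempty Q0]
    (hsymm : ∀ i j, C i j = C j i) (hdiag : ∀ i, C i i = 2) (hoff : ∀ i j, i ≠ j → C i j ≤ 0)
    {δ : Q0 → ℕ} (hδ : condStar C δ) {τ : Q0 → ℕ} {n : ℕ} {c : ℤ} (hc : 1 ≤ c)
    (hcn : c ≤ 4 * n) (hτ : ∀ i, 1 ≤ τ i) (hτδ : ∀ i, δ i ≠ 0 → n ≤ τ i)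
    (hrow : ∀ i, (of C *ᵥ nvec τ) i ≤ -c - 1) :
    ∃ m, IsGreatest (decompVals C τ) m ∧ IsGreatest (subVals C τ) m ∧ 2 * m ≤ -c := by
  have hbound : ∀ z ∈ subVals C τ, 2 * z ≤ -c := by
    rintro _ ⟨v, hvτ, hv0, hne, rfl⟩
    have := four_mul_bform_sub_le C hsymm hdiag hoff hδ (τ := nvec τ) (by omega : 0 ≤ c) hcn
      (fun i => by simpa [nvec] using hτ i) (fun i hi => Nat.cast_le.2 (hτδ i hi)) hrow
      (nvec_mem_Icc hvτ) (nvec_zero (Q0 := Q0) ▸ nvec_injective.ne hv0) (nvec_injective.ne hne)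
    linarith
  obtain ⟨i⟩ := ‹Nonempty Q0›
  have hne : (subVals C τ).Nonempty := by
    refine ⟨_, Pi.single i 1, fun j => ?_, by simp, fun h => ?_, rfl⟩
    · rcases eq_or_ne j i with rfl | hj <;> simp [*]
    · have hii : (of C *ᵥ nvec (Pi.single i 1)) i = 2 := by
        simp [nvec, mulVec, dotProduct, Pi.single_apply, hdiag]
      rw [h] at hii
      linarith [hrow i]
  obtain ⟨m, hdec, hsub⟩ := exists_isGreatest_decompVals_subVals C hsymm hne
    fun z hz => by linarith [hbound z hz]
  exact ⟨m, hdec, hsub, hbound m hsub.1⟩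

end Values

/-- Lemma 4.2: for the Cartan form `C` of a quiver without loops, `δ` satisfying (∗) for
`C` and `d` of full support, for all large `n` the maximum of
`(τ,τ) - Σ (d^k, d^k)` over decompositions of `τ = d + nδ` into at least two nonzero
dimension vectors equals the maximum of `2(v, τ - v)` over `0 < v < τ`; moreover this
common maximum tends to `-∞` as `n → ∞`. -/
theorem decomp_max_eq_sub_max_and_tendsto_atBot
    {Q0 : Type*} [Fintype Q0] [DecidableEq Q0] [Nonempty Q0]
    (C : Q0 → Q0 → ℤ) (hsymm : ∀ i j, C i j = C j i)
    (hdiag : ∀ i, C i i = 2) (hoff : ∀ i j, i ≠ j → C i j ≤ 0)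
    (δ : Q0 → ℕ) (hδ : condStar C δ)
    (d : Q0 → ℕ) (hd : ∀ i, 1 ≤ d i) :
    (∃ N : ℕ, ∀ n ≥ N, ∃ m : ℤ,
        IsGreatest (decompVals C fun i => d i + n * δ i) m ∧
          IsGreatest (subVals C fun i => d i + n * δ i) m) ∧
      ∀ M : ℤ, ∃ N : ℕ, ∀ n ≥ N,
        ∀ z ∈ decompVals C (fun i => d i + n * δ i), z < M := by
  obtain ⟨K, hK⟩ := Finite.exists_le fun i => ((of C *ᵥ nvec d) i).toNat
  have key (n : ℕ) (hn : K + 2 ≤ n) : ∃ m, IsGreatest (decompVals C fun i => d i + n * δ i) m ∧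
      IsGreatest (subVals C fun i => d i + n * δ i) m ∧ 2 * m ≤ -(n - K - 1) :=
    exists_isGreatest_decompVals_subVals_of_mulVec_le C hsymm hdiag hoff hδ (by omega) (by omega)
      (fun i => (hd i).trans (Nat.le_add_right _ _))
      (fun i hi => (Nat.le_mul_of_pos_right n (Nat.pos_of_ne_zero hi)).trans (Nat.le_add_left _ _))
      fun i => by linarith [hδ.mulVec_add_mul_le d n i, Int.toNat_le.1 (hK i)]
  refine ⟨⟨K + 2, fun n hn => ?_⟩, fun M => ⟨K + 2 + (-2 * M).toNat, fun n hn z hz => ?_⟩⟩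
  · obtain ⟨m, hdec, hsub, -⟩ := key n hn
    exact ⟨m, hdec, hsub⟩
  · obtain ⟨m, hdec, -, hm⟩ := key n (by omega)
    have := hdec.2 hz
    omega
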